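/- arXiv:2307.16552 — 4 statements merged into one kernel-verified Lean document; each statement's English description precedes it below -/
import Mathlib

section
/- Let G be an endofunctor on Set that preserves weak pullbacks (i.e., for all f : X → Z, g : Y → Z, with W = {(x,y) | f x = g y} and projections p, q, every (a, b) ∈ G X × G Y with (G f) a = (G g) b admits c ∈ G W with (G p) c = a and (G q) c = b). Let F be a subfunctor of G, i.e., an endofunctor F with a natural transformation η : F ⟹ G all of whose components are injective. Then F admits a diagonal-preserving lax F-lifting. -/
universe u v

open CategoryTheory

/-- The graph of a function, as a relation. -/
def gr {X Y : Type u} (f : X → Y) : Rel X Y := fun x y => f x = y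

/-- A lax lifting of an endofunctor `F` on `Set` to relations: monotone, laxly
functorial, and laxly extending graphs and converse graphs. -/
structure LaxLifting (F : Type u ⥤ Type u) : Type (u + 1) where
  map : ∀ {X Y : Type u}, Rel X Y → Rel (F.obj X) (F.obj Y)
  mono : ∀ {X Y : Type u} {R S : Rel X Y}, R ≤ S → map R ≤ map S
  laxComp : ∀ {X Y Z : Type u} (R : Rel X Y) (S : Rel Y Z),
    Relation.Comp (map R) (map S) ≤ map (Relation.Comp R S)
  graph_le : ∀ {X Y : Type u} (f : X → Y), gr (F.map (TypeCat.ofHom f)) ≤ map (gr f)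
  graphInv_le : ∀ {X Y : Type u} (f : X → Y), flip (gr (F.map (TypeCat.ofHom f))) ≤ map (flip (gr f))

/-- Pointwise order on lax liftings. -/
def LiftLE {F : Type u ⥤ Type u} (L L' : LaxLifting F) : Prop :=
  ∀ (X Y : Type u) (R : Rel X Y), L.map R ≤ L'.map R
/-- `G` preserves weak pullbacks. -/
def PreservesWeakPullbacks (G : Type u ⥤ Type u) : Prop :=
  ∀ (X Y Z : Type u) (f : X → Z) (g : Y → Z) (a : G.obj X) (b : G.obj Y),
    G.map (TypeCat.ofHom f) a = G.map (TypeCat.ofHom g) b →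
      ∃ c : G.obj {p : X × Y // f p.1 = g p.2},
        G.map (TypeCat.ofHom (fun p : {p : X × Y // f p.1 = g p.2} => p.1.1)) c = a ∧
        G.map (TypeCat.ofHom (fun p : {p : X × Y // f p.1 = g p.2} => p.1.2)) c = b

/-! The Barr lifting of `G` relates `a : G X` and `b : G Y` when both are images of one element of
`G {p // R p.1 p.2}` under the two projections. Weak pullback preservation makes it laxly
functorial, and it preserves diagonals because the two projections of the diagonal coincide.
Restricting it along `η` gives a lax lifting of `F`, and injectivity of the components of `η` is
exactly what carries diagonal preservation over. -/

open TypeCat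

lemma CategoryTheory.Functor.map_ofHom_id_apply (G : Type u ⥤ Type u) {X : Type u} (a : G.obj X) :
    G.map (ofHom id) a = a :=
  G.map_id_apply X a

lemma CategoryTheory.Functor.map_ofHom_map_ofHom (G : Type u ⥤ Type u) {X Y Z : Type u}
    (f : X → Y) (g : Y → Z) (a : G.obj X) :
    G.map (ofHom g) (G.map (ofHom f) a) = G.map (ofHom (g ∘ f)) a :=
  (G.map_comp_apply (ofHom f) (ofHom g) a).symm

def barr (G : Type u ⥤ Type u) {X Y : Type u} (R : Rel X Y) : Rel (G.obj X) (G.obj Y) :=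
  fun a b => ∃ c : G.obj {p : X × Y // R p.1 p.2},
    G.map (ofHom fun p => p.1.1) c = a ∧ G.map (ofHom fun p => p.1.2) c = b

section barr

variable (G : Type u ⥤ Type u) {X Y Z : Type u}

lemma barr_map_map {W : Type u} {R : Rel X Y} (p : W → X) (q : W → Y) (hpq : ∀ w, R (p w) (q w))
    (d : G.obj W) : barr G R (G.map (ofHom p) d) (G.map (ofHom q) d) :=
  ⟨G.map (ofHom fun w => ⟨(p w, q w), hpq w⟩) d, G.map_ofHom_map_ofHom _ _ d,
    G.map_ofHom_map_ofHom _ _ d⟩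

lemma barr_mono {R S : Rel X Y} (h : R ≤ S) : barr G R ≤ barr G S := by
  rintro _ _ ⟨c, rfl, rfl⟩
  exact barr_map_map G _ _ (fun w => h _ _ w.2) c

lemma gr_le_barr (f : X → Y) : gr (G.map (ofHom f)) ≤ barr G (gr f) := by
  rintro a _ rfl
  simpa only [G.map_ofHom_id_apply] using barr_map_map G (R := gr f) id f (fun _ => rfl) a

lemma flip_gr_le_barr (f : X → Y) : flip (gr (G.map (ofHom f))) ≤ barr G (flip (gr f)) := by
  rintro _ a rfl
  simpa only [G.map_ofHom_id_apply] using barr_map_map G (R := flip (gr f)) f id (fun _ => rfl) a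

lemma barr_comp (hG : PreservesWeakPullbacks G) (R : Rel X Y) (S : Rel Y Z) :
    Relation.Comp (barr G R) (barr G S) ≤ barr G (Relation.Comp R S) := by
  rintro _ _ ⟨b, ⟨c₁, rfl, hc₁⟩, ⟨c₂, hc₂, rfl⟩⟩
  -- glue the two tabulations along their common leg into `Y`
  obtain ⟨d, rfl, rfl⟩ := hG _ _ Y _ _ c₁ c₂ (hc₁.trans hc₂.symm)
  simp only [G.map_ofHom_map_ofHom]
  exact barr_map_map G _ _ (fun w => ⟨_, w.1.1.2, w.2 ▸ w.1.2.2⟩) d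

lemma barr_eq_le_eq : barr G (fun x y : X => x = y) ≤ fun a b => a = b := by
  rintro _ _ ⟨c, rfl, rfl⟩
  exact congrArg (fun f => G.map (ofHom f) c) (funext fun p => p.2)

end barr

def LaxLifting.barr (G : Type u ⥤ Type u) (hG : PreservesWeakPullbacks G) : LaxLifting G where
  map := _root_.barr G
  mono := barr_mono G
  laxComp := barr_comp G hG
  graph_le := gr_le_barr G
  graphInv_le := flip_gr_le_barr G

def LaxLifting.comap {F G : Type u ⥤ Type u} (L : LaxLifting G) (η : F ⟶ G) : LaxLifting F where
  map {X Y} R a b := L.map R (η.app X a) (η.app Y b)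
  mono h _ _ := L.mono h _ _
  laxComp R S _ _ := fun ⟨b, hab, hbc⟩ => L.laxComp R S _ _ ⟨η.app _ b, hab, hbc⟩
  graph_le f a _ := by
    rintro rfl
    have hnat := (η.naturality_apply (ofHom f) a).symm
    exact L.graph_le f _ _ hnat
  graphInv_le f _ a := by
    rintro rfl
    have hnat := (η.naturality_apply (ofHom f) a).symm
    exact L.graphInv_le f _ _ hnat

/-- Every subfunctor of a weak pullback-preserving functor admits a
diagonal-preserving lax lifting. -/
theorem subfunctor_admits_diagonal_preserving_lifting (F G : Type u ⥤ Type u)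
    (hG : PreservesWeakPullbacks G) (η : F ⟶ G)
    (hinj : ∀ X : Type u, Function.Injective (η.app X)) :
    ∃ L : LaxLifting F, ∀ (X : Type u) (a b : F.obj X),
      L.map (fun x y : X => x = y) a b → a = b :=
  ⟨(LaxLifting.barr G hG).comap η, fun X _ _ h => hinj X (barr_eq_le_eq G _ _ h)⟩
end

section
/- Let F be an endofunctor on Set. The operations L ↦ λ^L and λ ↦ L^λ are mutually inverse: for every lax F-lifting L, L^{(λ^L)} = L, and for every lax distributive law λ for F, λ^{(L^λ)} = λ. -/
universe u v

open CategoryTheory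

/-- A lax distributive law of \`F\` over the powerset monad: a family of maps
\`λ_X : F (P X) → P (F X)\` that is monotone, laxly natural, and laxly compatible
with the unit and multiplication of the powerset monad. -/
structure LaxDistLaw (F : Type u ⥤ Type u) : Type (u + 1) where
  app : ∀ Z : Type u, F.obj (Set Z) → Set (F.obj Z)
  mono : ∀ (X Y : Type u) (f g : X → Set Y), (∀ x, f x ⊆ g x) →
    ∀ a : F.obj X, app Y (F.map (TypeCat.ofHom f) a) ⊆ app Y (F.map (TypeCat.ofHom g) a)
  laxNat : ∀ (X Y : Type u) (f : X → Set Y) (a : F.obj (Set X)),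
    F.map (TypeCat.ofHom f) '' app X a ⊆ app (Set Y) (F.map (TypeCat.ofHom (Set.image f)) a)
  laxMul : ∀ (Z : Type u) (a : F.obj (Set (Set Z))),
    ⋃₀ (app Z '' app (Set Z) a) ⊆ app Z (F.map (TypeCat.ofHom Set.sUnion) a)
  laxUnit : ∀ (Z : Type u) (a : F.obj Z),
    a ∈ app Z (F.map (TypeCat.ofHom (fun z => ({z} : Set Z))) a)

/-- The Kleisli map \`χ_R : X → P Y\` associated to a relation \`R : X ⇸ Y\`. -/
def chi {X Y : Type u} (R : Rel X Y) : X → Set Y := fun x => {y | R x y}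

/-- The membership relation \`∋_Z : P Z ⇸ Z\`. -/
def memRel (Z : Type u) : Rel (Set Z) Z := fun A z => z ∈ A

/-- The lifting assignment \`L^λ\` induced by a distributive-law-shaped family:
\`L^λ R := ⌊λ_Y ∘ F χ_R⌋\`. -/
def toLiftMap (F : Type u ⥤ Type u) (lam : ∀ Z : Type u, F.obj (Set Z) → Set (F.obj Z)) :
    ∀ X Y : Type u, Rel X Y → Rel (F.obj X) (F.obj Y) :=
  fun X Y R a b => b ∈ lam Y (F.map (TypeCat.ofHom (chi R)) a)

/-- The distributive-law-shaped family \`λ^L\` induced by a lifting assignment: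
\`λ^L_Z := χ_{L(∋_Z)}\`. -/
def toLawMap (F : Type u ⥤ Type u)
    (Lm : ∀ X Y : Type u, Rel X Y → Rel (F.obj X) (F.obj Y)) :
    ∀ Z : Type u, F.obj (Set Z) → Set (F.obj Z) :=
  fun Z a => {b | Lm (Set Z) Z (memRel Z) a b}

/-
A lax lifting `L` commutes with precomposition by graphs, `L (gr f ; S) = gr (F f) ; L S`:
one inclusion is lax functoriality after `gr (F f) ⊆ L (gr f)`, the other uses
`(gr (F f))° ⊆ L ((gr f)°)` together with `(gr f)° ; gr f ⊆ id`. Since `R = gr χ_R ; ∋`,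
this gives `L^(λ^L) R = gr (F χ_R) ; L ∋ = L R`. In the other direction `χ_∋ = id`,
so `λ^(L^λ) = λ ∘ F id = λ` holds for any family `λ` whatsoever.
-/

theorem comp_gr_chi_memRel {X Y : Type u} (R : Rel X Y) :
    Relation.Comp (gr (chi R)) (memRel Y) = R := by
  funext x y
  exact propext ⟨by rintro ⟨_, rfl, hy⟩; exact hy, fun h => ⟨_, rfl, h⟩⟩

theorem chi_memRel (Z : Type u) : chi (memRel Z) = id := rfl

namespace LaxLifting

variable {F : Type u ⥤ Type u} (L : LaxLifting F)

theorem map_comp_gr_iff {X Y Z : Type u} (f : X → Y) (S : Rel Y Z) (a : F.obj X)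
    (c : F.obj Z) :
    L.map (Relation.Comp (gr f) S) a c ↔ L.map S (F.map (TypeCat.ofHom f) a) c := by
  constructor
  · intro h
    have hinv : L.map (flip (gr f)) (F.map (TypeCat.ofHom f) a) a := L.graphInv_le f _ _ rfl
    have hcomp := L.laxComp _ _ _ _ ⟨a, hinv, h⟩
    refine L.mono ?_ _ _ hcomp
    rintro y z ⟨x, rfl, _, rfl, hS⟩
    exact hS
  · intro h
    exact L.laxComp _ _ _ _ ⟨_, L.graph_le f a _ rfl, h⟩

theorem toLiftMap_toLawMap {X Y : Type u} (R : Rel X Y) :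
    toLiftMap F (toLawMap F fun _ _ => L.map) X Y R = L.map R := by
  funext a b
  have h := L.map_comp_gr_iff (chi R) (memRel Y) a b
  rw [comp_gr_chi_memRel] at h
  exact propext h.symm

end LaxLifting

theorem toLawMap_toLiftMap {F : Type u ⥤ Type u}
    (lam : ∀ Z : Type u, F.obj (Set Z) → Set (F.obj Z)) (Z : Type u) :
    toLawMap F (toLiftMap F lam) Z = lam Z := by
  funext a
  change lam Z (F.map (TypeCat.ofHom (chi (memRel Z))) a) = lam Z a
  rw [chi_memRel, show TypeCat.ofHom (id : Set Z → Set Z) = 𝟙 _ from rfl, F.map_id]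
  rfl

/-- The operations `L ↦ λ^L` and `λ ↦ L^λ` are mutually inverse. -/
theorem lift_law_inverse (F : Type u ⥤ Type u) :
    (∀ L : LaxLifting F, ∀ (X Y : Type u) (R : Rel X Y),
      toLiftMap F (toLawMap F (fun X Y => L.map (X := X) (Y := Y))) X Y R = L.map R) ∧
    (∀ lam : LaxDistLaw F, ∀ Z : Type u,
      toLawMap F (toLiftMap F lam.app) Z = lam.app Z) :=
  ⟨fun L _ _ R => L.toLiftMap_toLawMap R, fun lam Z => toLawMap_toLiftMap lam.app Z⟩
end

section
/- Let F be an endofunctor on Set and L a lax F-lifting. Then λ^L, defined by λ^L_Z := χ_{L(∋_Z)}, is a lax distributive law for F: it satisfies monotonicity, lax naturality, and the lax Eilenberg–Moore conditions. -/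
universe u v

open CategoryTheory

/-!
Each axiom of a lax distributive law is, after unfolding `λ^L = χ_{L(∋)}`, a statement
`L R x y` for a relation `R` built from `∋` and graphs. One reaches it by chaining a
converse graph `L((gr f)°)`, the given `L(∋)` facts and a graph `L(gr f)` with lax
functoriality, and then shrinking the composite relation to `R` by monotonicity of `L`.
-/

namespace LaxLifting

variable {F : Type u ⥤ Type u} (L : LaxLifting F)

theorem map_gr_apply {X Y : Type u} (f : X → Y) (a : F.obj X) :
    L.map (gr f) a (F.map (TypeCat.ofHom f) a) :=
  L.graph_le f _ _ rfl

theorem map_flip_gr_apply {X Y : Type u} (f : X → Y) (a : F.obj X) :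
    L.map (flip (gr f)) (F.map (TypeCat.ofHom f) a) a :=
  L.graphInv_le f _ _ rfl

theorem map_of_comp_le {X Y Z : Type u} {R : Rel X Y} {S : Rel Y Z} {T : Rel X Z}
    (h : Relation.Comp R S ≤ T) {a : F.obj X} {b : F.obj Y} {c : F.obj Z}
    (hab : L.map R a b) (hbc : L.map S b c) : L.map T a c :=
  L.mono h _ _ (L.laxComp R S _ _ ⟨b, hab, hbc⟩)

theorem map_memRel_map_mono {X Y : Type u} {f g : X → Set Y} (hfg : ∀ x, f x ⊆ g x)
    (a : F.obj X) {b : F.obj Y} (hb : L.map (memRel Y) (F.map (TypeCat.ofHom f) a) b) :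
    L.map (memRel Y) (F.map (TypeCat.ofHom g) a) b := by
  have hsup : L.map (· ⊇ ·) (F.map (TypeCat.ofHom g) a) (F.map (TypeCat.ofHom f) a) :=
    L.map_of_comp_le (fun _ _ ⟨x, hgx, hfx⟩ => hgx ▸ hfx ▸ hfg x)
      (L.map_flip_gr_apply g a) (L.map_gr_apply f a)
  exact L.map_of_comp_le (fun _ _ ⟨_, hBA, hy⟩ => hBA hy) hsup hb

theorem map_memRel_map_image {X Y : Type u} (f : X → Set Y) {a : F.obj (Set X)} {b : F.obj X}
    (hb : L.map (memRel X) a b) :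
    L.map (memRel (Set Y)) (F.map (TypeCat.ofHom (Set.image f)) a) (F.map (TypeCat.ofHom f) b) :=
  L.map_of_comp_le (fun _ _ ⟨_, ⟨_, hA, hx⟩, hfx⟩ => hA ▸ hfx ▸ Set.mem_image_of_mem f hx)
    (L.map_of_comp_le le_rfl (L.map_flip_gr_apply (Set.image f) a) hb) (L.map_gr_apply f b)

theorem map_memRel_map_sUnion {Z : Type u} {a : F.obj (Set (Set Z))} {b : F.obj (Set Z)}
    {c : F.obj Z} (hb : L.map (memRel (Set Z)) a b) (hc : L.map (memRel Z) b c) :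
    L.map (memRel Z) (F.map (TypeCat.ofHom Set.sUnion) a) c :=
  L.map_of_comp_le (fun _ _ ⟨B, ⟨_, h𝒜, hB⟩, hz⟩ => h𝒜 ▸ ⟨B, hB, hz⟩)
    (L.map_of_comp_le le_rfl (L.map_flip_gr_apply Set.sUnion a) hb) hc

theorem map_memRel_map_singleton {Z : Type u} (a : F.obj Z) :
    L.map (memRel Z) (F.map (TypeCat.ofHom fun z => ({z} : Set Z)) a) a :=
  L.mono (fun _ _ hz => hz ▸ rfl) _ _ (L.map_flip_gr_apply _ a)

def toLaxDistLaw : LaxDistLaw F where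
  app := toLawMap F fun _ _ => L.map
  mono _ _ _ _ hfg a _ := L.map_memRel_map_mono hfg a
  laxNat _ _ f _ := by
    rintro _ ⟨b, hb, rfl⟩
    exact L.map_memRel_map_image f hb
  laxMul _ _ := by
    rintro c ⟨_, ⟨b, hb, rfl⟩, hc⟩
    exact L.map_memRel_map_sUnion hb hc
  laxUnit _ a := L.map_memRel_map_singleton a

end LaxLifting

/-- For any lax `F`-lifting `L`, the family `λ^L := χ_{L(∋)}` is a lax
distributive law for `F`: it satisfies monotonicity, lax naturality, and the
lax Eilenberg–Moore conditions. -/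
theorem toLawMap_is_lax_dist_law (F : Type u ⥤ Type u) (L : LaxLifting F) :
    ∃ lam : LaxDistLaw F,
      lam.app = toLawMap F (fun X Y => L.map (X := X) (Y := Y)) :=
  ⟨L.toLaxDistLaw, rfl⟩
end

section
/- Let F be an endofunctor on Set and λ a lax distributive law for F, and let L^λ be defined by L^λ R := ⌊λ_Y ∘ F χ_R⌋. If λ is laxly extensional (λ_Z ∘ F η_Z ≤ η_{F Z}), then L^λ is diagonal-preserving. If λ is symmetric ((λ_Y ∘ F f)^♭ = λ_X ∘ F (f^♭) for all f : X → P Y), then L^λ is symmetric. -/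
universe u v

open CategoryTheory

/-- The converse of a Kleisli map: `f^♭(y) = {x | y ∈ f x}`. -/
def flat {A B : Type u} (f : A → Set B) : B → Set A := fun b => {a | b ∈ f a}

/-
The Kleisli map of the diagonal is the unit `η`, and the Kleisli map of a converse is the converse
`(χ_R)^♭` of the Kleisli map; so `L^λ Δ = ⌊λ ∘ F η⌋ ⊆ ⌊η⌋ = Δ` under extensionality, and
`L^λ R° = ⌊λ ∘ F (χ_R)^♭⌋ = ⌊(λ ∘ F χ_R)^♭⌋ = (L^λ R)°` under symmetry.
-/

theorem chi_eq_singleton {X : Type u} : chi (fun x y : X => x = y) = fun x => ({x} : Set X) := by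
  funext x
  ext y
  exact eq_comm

section

variable {F : Type u ⥤ Type u} {lam : ∀ Z : Type u, F.obj (Set Z) → Set (F.obj Z)}

theorem eq_of_toLiftMap_eq {X : Type u}
    (hext : ∀ a : F.obj X, lam X (F.map (TypeCat.ofHom (fun x => ({x} : Set X))) a) ⊆ {a})
    {a b : F.obj X} (hab : toLiftMap F lam X X (fun x y : X => x = y) a b) : a = b := by
  rw [toLiftMap, chi_eq_singleton] at hab
  exact (hext a hab).symm

theorem toLiftMap_flip {X Y : Type u}
    (hsym : ∀ f : X → Set Y, flat (fun a : F.obj X => lam Y (F.map (TypeCat.ofHom f) a)) =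
      fun b : F.obj Y => lam X (F.map (TypeCat.ofHom (flat f)) b))
    (R : Rel X Y) : toLiftMap F lam Y X (flip R) = flip (toLiftMap F lam X Y R) := by
  funext b a
  exact congrArg (a ∈ ·) (congrFun (hsym (chi R)) b).symm

end

/-- If `λ` is laxly extensional then `L^λ` is diagonal-preserving; if `λ` is
symmetric then `L^λ` is symmetric. -/
theorem toLiftMap_diagonal_and_symmetric (F : Type u ⥤ Type u) (lam : LaxDistLaw F) :
    ((∀ (Z : Type u) (a : F.obj Z),
        lam.app Z (F.map (TypeCat.ofHom (fun z => ({z} : Set Z))) a) ⊆ {a}) →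
      ∀ (X : Type u) (a b : F.obj X),
        toLiftMap F lam.app X X (fun x y : X => x = y) a b → a = b) ∧
    ((∀ (X Y : Type u) (f : X → Set Y),
        flat (fun a : F.obj X => lam.app Y (F.map (TypeCat.ofHom f) a)) =
          fun b : F.obj Y => lam.app X (F.map (TypeCat.ofHom (flat f)) b)) →
      ∀ (X Y : Type u) (R : Rel X Y),
        toLiftMap F lam.app Y X (flip R) = flip (toLiftMap F lam.app X Y R)) :=
  ⟨fun hext X _ _ => eq_of_toLiftMap_eq (hext X),
    fun hsym X Y => toLiftMap_flip (hsym X Y)⟩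
end
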